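/- Let r_B, r_C, r_G > 0 satisfy 4(b−a)M₁²M₂²(r_G + (b−a)r_C)r_B < 1, and let Q^{(1)}_{s,t}, Q^{(2)}_{s,t} be uniformly bounded strongly continuous families with bounds M₁, M₂. Then for all G ∈ L(X₁,X₂), C ∈ C_u([a,b];L(X₁,X₂)), B ∈ C_u([a,b];L(X₂,X₁)) with ‖G‖ ≤ r_G, ‖C‖_u ≤ r_C, ‖B‖_u ≤ r_B, the equation P(t) = Q^{(2)}_{b,t} G Q^{(1)}_{b,t} + ∫_t^b Q^{(2)}_{r,t}{C(r) − P(r)B(r)P(r)}Q^{(1)}_{r,t}dr has a unique solution P ∈ C_u([a,b]; L(X₁,X₂)), and it satisfies ‖P‖_u ≤ 2M₁M₂(r_G + (b−a)r_C). -/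

import Mathlib

/-!
The right-hand side `Φ` of the equation maps the strongly continuous families bounded by
`ρ = 2M₁M₂(r_G + (b-a)r_C)` into themselves, and is Lipschitz there in the uniform norm with
constant `k = 4(b-a)M₁²M₂²(r_G + (b-a)r_C)r_B < 1`, because
`PBP - P'BP' = (P - P')BP + P'B(P - P')`. Banach's fixed point theorem gives the solution.
Any other strongly continuous solution is bounded by Banach–Steinhaus, and the same identity gives
the Volterra estimate `‖P'(t) - P(t)‖ ≤ K ∫_t^b ‖P'(r) - P(r)‖ dr`, whose iterates
`D (K(b-t))ⁿ/n!` tend to `0`.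

Integrals of operator families are taken strongly, `x ↦ ∫ A(r) x dr`: a strongly continuous
family need not be Bochner integrable in operator norm.
-/

open MeasureTheory intervalIntegral Set Filter Topology
open scoped Nat ENNReal UniformConvergence

section StrongContinuity

variable {α E F G : Type*} [TopologicalSpace α]
  [NormedAddCommGroup E] [NormedSpace ℝ E] [NormedAddCommGroup F] [NormedSpace ℝ F]
  [NormedAddCommGroup G] [NormedSpace ℝ G]

def StronglyContinuousOn (A : α → E →L[ℝ] F) (s : Set α) : Prop :=
  ∀ x, ContinuousOn (fun t => A t x) s

namespace StronglyContinuousOn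

variable {A A' : α → E →L[ℝ] F} {s s' : Set α}

theorem mono (hA : StronglyContinuousOn A s) (hs : s' ⊆ s) : StronglyContinuousOn A s' :=
  fun x => (hA x).mono hs

theorem sub (hA : StronglyContinuousOn A s) (hA' : StronglyContinuousOn A' s) :
    StronglyContinuousOn (fun t => A t - A' t) s :=
  fun x => (hA x).sub (hA' x)

theorem const (T : E →L[ℝ] F) : StronglyContinuousOn (fun _ => T) s :=
  fun _ => continuousOn_const

theorem exists_norm_le [CompleteSpace E] (hA : StronglyContinuousOn A s) (hs : IsCompact s) :
    ∃ M, ∀ t ∈ s, ‖A t‖ ≤ M := by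
  obtain ⟨M, hM⟩ := banach_steinhaus (g := fun t : s => A t) fun x => by
    obtain ⟨M, hM⟩ := hs.exists_bound_of_continuousOn (hA x)
    exact ⟨M, fun t => hM t t.2⟩
  exact ⟨M, fun t ht => hM ⟨t, ht⟩⟩

theorem continuousOn_apply [CompleteSpace E] (hA : StronglyContinuousOn A s) (hs : IsCompact s)
    {f : α → E} (hf : ContinuousOn f s) : ContinuousOn (fun t => A t (f t)) s := by
  obtain ⟨M, hM⟩ := hA.exists_norm_le hs
  intro t₀ ht₀
  have hsmall : Tendsto (fun t => A t (f t) - A t (f t₀)) (𝓝[s] t₀) (𝓝 0) := by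
    have hf₀ : Tendsto (fun t => M * ‖f t - f t₀‖) (𝓝[s] t₀) (𝓝 0) := by
      simpa using (((hf t₀ ht₀).sub_const (f t₀)).norm.const_mul M)
    refine squeeze_zero_norm' ?_ hf₀
    filter_upwards [self_mem_nhdsWithin] with t ht
    rw [← map_sub]
    exact (A t).le_of_opNorm_le (hM t ht) _
  simpa [ContinuousWithinAt] using hsmall.add (hA (f t₀) t₀ ht₀)

theorem comp [CompleteSpace F] {B : α → F →L[ℝ] G} (hB : StronglyContinuousOn B s)
    (hA : StronglyContinuousOn A s) (hs : IsCompact s) :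
    StronglyContinuousOn (fun t => B t ∘L A t) s :=
  fun x => hB.continuousOn_apply hs (hA x)

end StronglyContinuousOn

end StrongContinuity

theorem continuousOn_intervalIntegral_lower {E : Type*} [NormedAddCommGroup E] [NormedSpace ℝ E]
    {F : ℝ → ℝ → E} {a b M : ℝ}
    (hF_right : ∀ t ∈ Icc a b, ContinuousOn (F t) (Icc t b))
    (hF_left : ∀ r ∈ Icc a b, ContinuousOn (fun t => F t r) (Icc a r))
    (hF_le : ∀ t ∈ Icc a b, ∀ r ∈ Icc t b, ‖F t r‖ ≤ M) :
    ContinuousOn (fun t => ∫ r in t..b, F t r) (Icc a b) := by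
  -- all the integrals are taken over the fixed interval `[a, b]`, cut off below `t`
  have hcut : ∀ t ∈ Icc a b,
      ∫ r in t..b, F t r = ∫ r in a..b, (Ioc t b).indicator (F t) r := by
    intro t ht
    rw [integral_of_le ht.2, integral_of_le (ht.1.trans ht.2),
      setIntegral_indicator measurableSet_Ioc, Ioc_inter_Ioc, max_eq_right ht.1, min_self]
  intro t₀ ht₀
  refine ContinuousWithinAt.congr ?_ (fun t ht => hcut t ht) (hcut t₀ ht₀)
  refine continuousWithinAt_of_dominated_interval (bound := fun _ => M) ?_ ?_
    intervalIntegrable_const ?_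
  · filter_upwards [self_mem_nhdsWithin] with t ht
    exact ((aestronglyMeasurable_indicator_iff measurableSet_Ioc).2
      (((hF_right t ht).mono Ioc_subset_Icc_self).aestronglyMeasurable measurableSet_Ioc)).restrict
  · filter_upwards [self_mem_nhdsWithin] with t ht
    refine Eventually.of_forall fun r hr => ?_
    by_cases hrt : r ∈ Ioc t b
    · rw [indicator_of_mem hrt]
      exact hF_le t ht r (Ioc_subset_Icc_self hrt)
    · rw [indicator_of_notMem hrt, norm_zero]
      exact (norm_nonneg _).trans (hF_le t₀ ht₀ t₀ ⟨le_rfl, ht₀.2⟩)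
  · filter_upwards [volume.ae_ne t₀] with r hrt₀ hr
    rw [uIoc_of_le (ht₀.1.trans ht₀.2)] at hr
    rcases hrt₀.lt_or_gt with hlt | hgt
    · have hzero : ∀ᶠ t in 𝓝[Icc a b] t₀, (Ioc t b).indicator (F t) r = 0 := by
        filter_upwards [nhdsWithin_le_nhds (eventually_gt_nhds hlt)] with t ht
        exact indicator_of_notMem (fun h => (h.1.trans ht).false) _
      exact continuousWithinAt_const.congr_of_eventuallyEq hzero (hzero.self_of_nhdsWithin ht₀)
    · have hnear : Icc a r ∈ 𝓝[Icc a b] t₀ :=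
        mem_nhdsWithin.2 ⟨Iio r, isOpen_Iio, hgt, fun t ht => ⟨ht.2.1, ht.1.le⟩⟩
      have heq : ∀ᶠ t in 𝓝[Icc a b] t₀, (Ioc t b).indicator (F t) r = F t r := by
        filter_upwards [nhdsWithin_le_nhds (eventually_lt_nhds hgt)] with t ht
        exact indicator_of_mem (show r ∈ Ioc t b from ⟨ht, hr.2⟩) _
      exact (((hF_left r ⟨hr.1.le, hr.2⟩) t₀ ⟨ht₀.1, hgt.le⟩).mono_of_mem_nhdsWithin
        hnear).congr_of_eventuallyEq heq (heq.self_of_nhdsWithin ht₀)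

section StrongIntegral

variable {E F : Type*} [NormedAddCommGroup E] [NormedSpace ℝ E] [CompleteSpace E]
  [NormedAddCommGroup F] [NormedSpace ℝ F]

/-- `0` when `x ↦ ∫ r in s..t, A r x` is not a bounded operator. -/
noncomputable def strongIntegral (A : ℝ → E →L[ℝ] F) (s t : ℝ) : E →L[ℝ] F :=
  open Classical in
  if h : ∃ T : E →L[ℝ] F, ∀ x, T x = ∫ r in s..t, A r x then h.choose else 0

variable {A A' : ℝ → E →L[ℝ] F} {s t : ℝ}

theorem strongIntegral_apply (hst : s ≤ t) (hA : StronglyContinuousOn A (Icc s t)) (x : E) :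
    strongIntegral A s t x = ∫ r in s..t, A r x := by
  obtain ⟨M, hM⟩ := hA.exists_norm_le isCompact_Icc
  have hint : ∀ x, IntervalIntegrable (fun r => A r x) volume s t := fun x =>
    (hA x).intervalIntegrable_of_Icc hst
  let T : E →L[ℝ] F := LinearMap.mkContinuous
    { toFun := fun x => ∫ r in s..t, A r x
      map_add' := fun x y => by simp only [map_add, integral_add (hint x) (hint y)]
      map_smul' := fun c x => by
        simp only [map_smul, RingHom.id_apply, intervalIntegral.integral_smul] }
    (M * |t - s|) fun x => by
      refine (intervalIntegral.norm_integral_le_of_norm_le_const fun r hr => ?_).trans_eq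
        (mul_right_comm _ _ _)
      rw [uIoc_of_le hst] at hr
      exact (A r).le_of_opNorm_le (hM r (Ioc_subset_Icc_self hr)) x
  have h : ∃ T : E →L[ℝ] F, ∀ x, T x = ∫ r in s..t, A r x := ⟨T, fun _ => rfl⟩
  rw [strongIntegral, dif_pos h]
  exact h.choose_spec x

theorem strongIntegral_sub (hst : s ≤ t) (hA : StronglyContinuousOn A (Icc s t))
    (hA' : StronglyContinuousOn A' (Icc s t)) :
    strongIntegral A s t - strongIntegral A' s t = strongIntegral (fun r => A r - A' r) s t := by
  ext x
  rw [sub_apply, strongIntegral_apply hst hA, strongIntegral_apply hst hA',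
    strongIntegral_apply hst (hA.sub hA'),
    ← integral_sub ((hA x).intervalIntegrable_of_Icc hst) ((hA' x).intervalIntegrable_of_Icc hst)]
  rfl

theorem norm_strongIntegral_le (hst : s ≤ t) (hA : StronglyContinuousOn A (Icc s t)) {g : ℝ → ℝ}
    (hg : IntervalIntegrable g volume s t) (hAg : ∀ r ∈ Icc s t, ‖A r‖ ≤ g r) :
    ‖strongIntegral A s t‖ ≤ ∫ r in s..t, g r := by
  refine ContinuousLinearMap.opNorm_le_bound _
    (integral_nonneg hst fun r hr => (norm_nonneg _).trans (hAg r hr)) fun x => ?_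
  rw [strongIntegral_apply hst hA, ← intervalIntegral.integral_mul_const]
  refine intervalIntegral.norm_integral_le_of_norm_le hst
    (Eventually.of_forall fun r hr => ?_) (hg.mul_const _)
  exact (A r).le_of_opNorm_le (hAg r (Ioc_subset_Icc_self hr)) x

end StrongIntegral

theorem nonpos_of_le_mul_integral {u : ℝ → ℝ} {a b K D : ℝ}
    (hD : ∀ t ∈ Icc a b, u t ≤ D)
    (hu : ∀ t ∈ Icc a b, ∀ g : ℝ → ℝ, Continuous g → (∀ r ∈ Icc t b, u r ≤ g r) →
      u t ≤ K * ∫ r in t..b, g r) :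
    ∀ t ∈ Icc a b, u t ≤ 0 := by
  have hpow : ∀ (n : ℕ) (t : ℝ), ∫ r in t..b, (b - r) ^ n = (b - t) ^ (n + 1) / (n + 1) := by
    intro n t
    simp [intervalIntegral.integral_comp_sub_left (fun r => r ^ n), integral_pow]
  have hiter : ∀ n : ℕ, ∀ t ∈ Icc a b, u t ≤ D * K ^ n / n ! * (b - t) ^ n := by
    intro n
    induction n with
    | zero => simpa using hD
    | succ n ih =>
      intro t ht
      refine (hu t ht _ (by fun_prop) fun r hr => ih r ⟨ht.1.trans hr.1, hr.2⟩).trans_eq ?_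
      rw [intervalIntegral.integral_const_mul, hpow, Nat.factorial_succ]
      push_cast
      field_simp
      ring
  intro t ht
  have hlim : Tendsto (fun n : ℕ => D * K ^ n / n ! * (b - t) ^ n) atTop (𝓝 0) := by
    have := (FloorSemiring.tendsto_pow_div_factorial_atTop (K * (b - t))).const_mul D
    simp only [mul_zero] at this
    refine this.congr fun n => ?_
    rw [mul_pow]
    ring
  exact ge_of_tendsto hlim (Eventually.of_forall fun n => hiter n t ht)

theorem UniformFun.edist_ne_top_of_norm_le {α E : Type*} [SeminormedAddCommGroup E]
    {f g : α →ᵤ E} {ρ : ℝ} (hf : ∀ t, ‖toFun f t‖ ≤ ρ) (hg : ∀ t, ‖toFun g t‖ ≤ ρ) :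
    edist f g ≠ ⊤ := by
  refine ne_top_of_le_ne_top (ENNReal.ofReal_ne_top (r := ρ + ρ)) (edist_le.2 fun t => ?_)
  rw [edist_dist]
  exact ENNReal.ofReal_le_ofReal <| (dist_le_norm_add_norm _ _).trans <| add_le_add (hf t) (hg t)

theorem edist_le_toNNReal_mul_of_norm_sub_le {E : Type*} [SeminormedAddCommGroup E] {x y : E}
    {k : ℝ} {e : ℝ≥0∞} (he : e ≠ ⊤) (h : ‖x - y‖ ≤ k * e.toReal) :
    edist x y ≤ Real.toNNReal k * e := by
  rw [edist_dist, dist_eq_norm, ← ENNReal.ofReal_toReal he, ← ENNReal.ofReal_coe_nnreal,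
    ← ENNReal.ofReal_mul NNReal.zero_le_coe]
  exact ENNReal.ofReal_le_ofReal <|
    h.trans (mul_le_mul_of_nonneg_right (Real.le_coe_toNNReal k) ENNReal.toReal_nonneg)

section FixedPoint

open UniformFun

variable {α E F : Type*} [TopologicalSpace α]
  [NormedAddCommGroup E] [NormedSpace ℝ E] [NormedAddCommGroup F] [NormedSpace ℝ F]

def boundedStronglyContinuousOn (I : Set α) (ρ : ℝ) : Set (α → E →L[ℝ] F) :=
  {P | StronglyContinuousOn P I ∧ ∀ t ∈ I, ‖P t‖ ≤ ρ}

theorem isClosed_setOf_stronglyContinuousOn (I : Set α) :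
    IsClosed {f : α →ᵤ (E →L[ℝ] F) | StronglyContinuousOn (toFun f) I} := by
  refine isClosed_iff_forall_filter.2 fun f u _ hu huf x => ?_
  rw [← tendsto_id', UniformFun.tendsto_iff_tendstoUniformly] at huf
  have hx := (ContinuousLinearMap.apply ℝ F x).uniformContinuous.comp_tendstoUniformly huf
  exact hx.tendstoUniformlyOn.continuousOn
    (Eventually.frequently (mem_of_superset (le_principal_iff.mp hu) fun g hg => hg x))

variable [CompleteSpace F]

theorem exists_fixedPoint_of_norm_sub_le {Φ : (α → E →L[ℝ] F) → α → E →L[ℝ] F} {I : Set α}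
    {ρ k : ℝ} (hρ : 0 ≤ ρ) (hk : k < 1)
    (hΦ : MapsTo Φ (boundedStronglyContinuousOn I ρ) (boundedStronglyContinuousOn I ρ))
    (hlip : ∀ P ∈ boundedStronglyContinuousOn I ρ, ∀ P' ∈ boundedStronglyContinuousOn I ρ,
      ∀ d, (∀ t ∈ I, ‖P t - P' t‖ ≤ d) → ∀ t ∈ I, ‖Φ P t - Φ P' t‖ ≤ k * d) :
    ∃ P ∈ boundedStronglyContinuousOn I ρ, ∀ t ∈ I, Φ P t = P t := by
  -- Banach's fixed point theorem in the uniform metric, for `Φ` cut off outside `I`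
  let s : Set (α →ᵤ (E →L[ℝ] F)) :=
    {f | StronglyContinuousOn (toFun f) I} ∩ ⋂ t, {f | ‖toFun f t‖ ≤ ρ}
  have hs : IsClosed s := (isClosed_setOf_stronglyContinuousOn I).inter <|
    isClosed_iInter fun t => isClosed_le (uniformContinuous_eval _ t).continuous.norm
      continuous_const
  have hsub : ∀ f ∈ s, toFun f ∈ boundedStronglyContinuousOn I ρ :=
    fun f hf => ⟨hf.1, fun t _ => mem_iInter.1 hf.2 t⟩
  let Ψ : (α →ᵤ (E →L[ℝ] F)) → (α →ᵤ (E →L[ℝ] F)) := fun f =>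
    ofFun (I.indicator (Φ (toFun f)))
  have hΨ : MapsTo Ψ s s := by
    intro f hf
    obtain ⟨hsc, hbd⟩ := hΦ (hsub f hf)
    refine ⟨fun x => (hsc x).congr fun t ht => ?_, mem_iInter.2 fun t => ?_⟩
    · simp [Ψ, indicator_of_mem ht]
    · by_cases ht : t ∈ I
      · simpa [Ψ, ht] using hbd t ht
      · simpa [Ψ, ht] using hρ
  have hfin : ∀ f ∈ s, ∀ g ∈ s, edist f g ≠ ⊤ := fun f hf g hg =>
    edist_ne_top_of_norm_le (fun t => mem_iInter.1 hf.2 t) fun t => mem_iInter.1 hg.2 t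
  have hcontr : ContractingWith (Real.toNNReal k) (hΨ.restrict Ψ s s) := by
    refine ⟨Real.toNNReal_lt_one.2 hk, fun f g => ?_⟩
    change edist (Ψ f) (Ψ g) ≤ _ * edist f.1 g.1
    have hfg : ∀ t ∈ I, ‖toFun f.1 t - toFun g.1 t‖ ≤ (edist f.1 g.1).toReal := fun t _ => by
      rw [← dist_eq_norm, dist_edist]
      exact ENNReal.toReal_mono (hfin _ f.2 _ g.2) edist_eval_le
    refine edist_le.2 fun t => ?_
    by_cases ht : t ∈ I
    · simp only [Ψ, toFun_ofFun, indicator_of_mem ht]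
      exact edist_le_toNNReal_mul_of_norm_sub_le (hfin _ f.2 _ g.2)
        (hlip _ (hsub _ f.2) _ (hsub _ g.2) _ hfg t ht)
    · simp [Ψ, ht]
  have h₀ : ofFun 0 ∈ s := ⟨fun _ => continuousOn_const, mem_iInter.2 fun t => by simpa using hρ⟩
  obtain ⟨P, hP, hfix, -⟩ :=
    hcontr.exists_fixedPoint' hs.isComplete hΨ h₀ (hfin _ h₀ _ (hΨ h₀))
  refine ⟨toFun P, hsub P hP, fun t ht => ?_⟩
  simpa [Ψ, ht] using congrFun (congrArg toFun hfix) t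

end FixedPoint

theorem ContinuousLinearMap.norm_comp_comp_le {E F G H : Type*}
    [NormedAddCommGroup E] [NormedSpace ℝ E] [NormedAddCommGroup F] [NormedSpace ℝ F]
    [NormedAddCommGroup G] [NormedSpace ℝ G] [NormedAddCommGroup H] [NormedSpace ℝ H]
    (A : G →L[ℝ] H) (T : F →L[ℝ] G) (B : E →L[ℝ] F) : ‖A ∘L T ∘L B‖ ≤ ‖A‖ * ‖T‖ * ‖B‖ := by
  calc ‖A ∘L T ∘L B‖ ≤ ‖A‖ * (‖T‖ * ‖B‖) :=
        (A.opNorm_comp_le _).trans (mul_le_mul_of_nonneg_left (T.opNorm_comp_le B) (norm_nonneg A))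
    _ = ‖A‖ * ‖T‖ * ‖B‖ := (mul_assoc _ _ _).symm

theorem ContinuousLinearMap.norm_comp_comp_sub_comp_comp_le {E F : Type*}
    [NormedAddCommGroup E] [NormedSpace ℝ E] [NormedAddCommGroup F] [NormedSpace ℝ F]
    (P P' : E →L[ℝ] F) (B : F →L[ℝ] E) :
    ‖P ∘L B ∘L P - P' ∘L B ∘L P'‖ ≤ (‖P‖ + ‖P'‖) * ‖B‖ * ‖P - P'‖ := by
  have hsplit : P ∘L B ∘L P - P' ∘L B ∘L P' = (P - P') ∘L B ∘L P + P' ∘L B ∘L (P - P') := by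
    ext x
    simp only [sub_apply, comp_apply, add_apply, map_sub]
    abel
  rw [hsplit]
  calc _ ≤ ‖P - P'‖ * ‖B‖ * ‖P‖ + ‖P'‖ * ‖B‖ * ‖P - P'‖ :=
        (norm_add_le _ _).trans (add_le_add (norm_comp_comp_le _ _ _) (norm_comp_comp_le _ _ _))
    _ = (‖P‖ + ‖P'‖) * ‖B‖ * ‖P - P'‖ := by ring

structure IsBoundedStronglyContinuousFamily {E : Type*} [NormedAddCommGroup E] [NormedSpace ℝ E]
    (Q : ℝ → ℝ → E →L[ℝ] E) (a b M : ℝ) : Prop where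
  norm_le : ∀ t s, a ≤ t → t ≤ s → s ≤ b → ‖Q s t‖ ≤ M
  stronglyContinuousOn_left : ∀ t ∈ Icc a b, StronglyContinuousOn (Q · t) (Icc t b)
  stronglyContinuousOn_right : ∀ s ∈ Icc a b, StronglyContinuousOn (Q s) (Icc a s)

section Riccati

variable {X₁ X₂ : Type*} [NormedAddCommGroup X₁] [NormedSpace ℝ X₁]
  [NormedAddCommGroup X₂] [NormedSpace ℝ X₂]
  (Q1 : ℝ → ℝ → X₁ →L[ℝ] X₁) (Q2 : ℝ → ℝ → X₂ →L[ℝ] X₂) (B : ℝ → X₂ →L[ℝ] X₁)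
  (C : ℝ → X₁ →L[ℝ] X₂) (G : X₁ →L[ℝ] X₂)

noncomputable def riccatiIntegrand (P : ℝ → X₁ →L[ℝ] X₂) (t r : ℝ) : X₁ →L[ℝ] X₂ :=
  Q2 r t ∘L (C r - P r ∘L B r ∘L P r) ∘L Q1 r t

noncomputable def riccatiMap (b : ℝ) (P : ℝ → X₁ →L[ℝ] X₂) (t : ℝ) : X₁ →L[ℝ] X₂ :=
  Q2 b t ∘L G ∘L Q1 b t + strongIntegral (riccatiIntegrand Q1 Q2 B C P t) t b

variable {Q1 Q2 B C G} {a b M₁ M₂ r_B r_C r_G : ℝ} {P P' : ℝ → X₁ →L[ℝ] X₂}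

theorem norm_riccatiIntegrand_le (t r : ℝ) :
    ‖riccatiIntegrand Q1 Q2 B C P t r‖ ≤ ‖Q2 r t‖ * (‖C r‖ + ‖P r‖ ^ 2 * ‖B r‖) * ‖Q1 r t‖ := by
  refine (ContinuousLinearMap.norm_comp_comp_le _ _ _).trans ?_
  gcongr
  calc _ ≤ ‖C r‖ + ‖P r ∘L B r ∘L P r‖ := norm_sub_le _ _
    _ ≤ ‖C r‖ + ‖P r‖ * ‖B r‖ * ‖P r‖ := by
        gcongr
        exact ContinuousLinearMap.norm_comp_comp_le _ _ _
    _ = _ := by ring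

theorem norm_riccatiIntegrand_sub_le (t r : ℝ) :
    ‖riccatiIntegrand Q1 Q2 B C P t r - riccatiIntegrand Q1 Q2 B C P' t r‖ ≤
      ‖Q2 r t‖ * ((‖P r‖ + ‖P' r‖) * ‖B r‖ * ‖P r - P' r‖) * ‖Q1 r t‖ := by
  have hsub : riccatiIntegrand Q1 Q2 B C P t r - riccatiIntegrand Q1 Q2 B C P' t r =
      Q2 r t ∘L (P' r ∘L B r ∘L P' r - P r ∘L B r ∘L P r) ∘L Q1 r t := by
    simp only [riccatiIntegrand, ← ContinuousLinearMap.comp_sub, ← ContinuousLinearMap.sub_comp,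
      sub_sub_sub_cancel_left]
  rw [hsub]
  refine (ContinuousLinearMap.norm_comp_comp_le _ _ _).trans ?_
  rw [norm_sub_rev]
  gcongr
  exact ContinuousLinearMap.norm_comp_comp_sub_comp_comp_le _ _ _

theorem IsBoundedStronglyContinuousFamily.nonneg {E : Type*} [NormedAddCommGroup E]
    [NormedSpace ℝ E] {Q : ℝ → ℝ → E →L[ℝ] E} {M : ℝ}
    (hQ : IsBoundedStronglyContinuousFamily Q a b M) (hab : a ≤ b) : 0 ≤ M :=
  (norm_nonneg _).trans (hQ.norm_le a a le_rfl le_rfl hab)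

variable [CompleteSpace X₁] [CompleteSpace X₂]

theorem stronglyContinuousOn_riccatiIntegrand_right
    (hQ1 : IsBoundedStronglyContinuousFamily Q1 a b M₁)
    (hQ2 : IsBoundedStronglyContinuousFamily Q2 a b M₂)
    (hB : StronglyContinuousOn B (Icc a b)) (hC : StronglyContinuousOn C (Icc a b))
    (hP : StronglyContinuousOn P (Icc a b)) {t : ℝ} (ht : t ∈ Icc a b) :
    StronglyContinuousOn (riccatiIntegrand Q1 Q2 B C P t) (Icc t b) := by
  have hsub : Icc t b ⊆ Icc a b := Icc_subset_Icc_left ht.1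
  have hPBP : StronglyContinuousOn (fun r => P r ∘L B r ∘L P r) (Icc t b) :=
    (hP.mono hsub).comp ((hB.mono hsub).comp (hP.mono hsub) isCompact_Icc) isCompact_Icc
  have hinner : StronglyContinuousOn (fun r => (C r - P r ∘L B r ∘L P r) ∘L Q1 r t) (Icc t b) :=
    ((hC.mono hsub).sub hPBP).comp (hQ1.stronglyContinuousOn_left t ht) isCompact_Icc
  exact (hQ2.stronglyContinuousOn_left t ht).comp hinner isCompact_Icc

theorem stronglyContinuousOn_riccatiIntegrand_left
    (hQ1 : IsBoundedStronglyContinuousFamily Q1 a b M₁)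
    (hQ2 : IsBoundedStronglyContinuousFamily Q2 a b M₂) {r : ℝ} (hr : r ∈ Icc a b) :
    StronglyContinuousOn (fun t => riccatiIntegrand Q1 Q2 B C P t r) (Icc a r) :=
  (hQ2.stronglyContinuousOn_right r hr).comp
    ((StronglyContinuousOn.const _).comp (hQ1.stronglyContinuousOn_right r hr) isCompact_Icc)
    isCompact_Icc

theorem riccatiMap_apply (hQ1 : IsBoundedStronglyContinuousFamily Q1 a b M₁)
    (hQ2 : IsBoundedStronglyContinuousFamily Q2 a b M₂)
    (hB : StronglyContinuousOn B (Icc a b)) (hC : StronglyContinuousOn C (Icc a b))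
    (hP : StronglyContinuousOn P (Icc a b)) {t : ℝ} (ht : t ∈ Icc a b) (x : X₁) :
    riccatiMap Q1 Q2 B C G b P t x = Q2 b t (G (Q1 b t x)) +
      ∫ r in t..b, Q2 r t (C r (Q1 r t x) - P r (B r (P r (Q1 r t x)))) := by
  rw [riccatiMap, add_apply,
    strongIntegral_apply ht.2 (stronglyContinuousOn_riccatiIntegrand_right hQ1 hQ2 hB hC hP ht)]
  rfl

theorem norm_riccatiMap_le (hQ1 : IsBoundedStronglyContinuousFamily Q1 a b M₁)
    (hQ2 : IsBoundedStronglyContinuousFamily Q2 a b M₂)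
    (hB : StronglyContinuousOn B (Icc a b)) (hC : StronglyContinuousOn C (Icc a b))
    (hBr : ∀ r ∈ Icc a b, ‖B r‖ ≤ r_B) (hCr : ∀ r ∈ Icc a b, ‖C r‖ ≤ r_C) (hG : ‖G‖ ≤ r_G)
    {m : ℝ} (hP : StronglyContinuousOn P (Icc a b)) (hPm : ∀ r ∈ Icc a b, ‖P r‖ ≤ m)
    {t : ℝ} (ht : t ∈ Icc a b) :
    ‖riccatiMap Q1 Q2 B C G b P t‖ ≤
      M₂ * r_G * M₁ + (b - a) * (M₂ * (r_C + m ^ 2 * r_B) * M₁) := by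
  have hab : a ≤ b := ht.1.trans ht.2
  have hM₁ := hQ1.nonneg hab
  have hM₂ := hQ2.nonneg hab
  have hm : 0 ≤ m := (norm_nonneg _).trans (hPm t ht)
  have hr_B : 0 ≤ r_B := (norm_nonneg _).trans (hBr t ht)
  have hr_C : 0 ≤ r_C := (norm_nonneg _).trans (hCr t ht)
  have hr_G : 0 ≤ r_G := (norm_nonneg _).trans hG
  have hterminal : ‖Q2 b t ∘L G ∘L Q1 b t‖ ≤ M₂ * r_G * M₁ := by
    refine (ContinuousLinearMap.norm_comp_comp_le _ _ _).trans ?_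
    gcongr
    exacts [hQ2.norm_le t b ht.1 ht.2 le_rfl, hQ1.norm_le t b ht.1 ht.2 le_rfl]
  have hintegral : ‖strongIntegral (riccatiIntegrand Q1 Q2 B C P t) t b‖ ≤
      (b - t) * (M₂ * (r_C + m ^ 2 * r_B) * M₁) := by
    refine (norm_strongIntegral_le ht.2
      (stronglyContinuousOn_riccatiIntegrand_right hQ1 hQ2 hB hC hP ht)
      intervalIntegrable_const fun r hr => ?_).trans_eq
      (by rw [intervalIntegral.integral_const, smul_eq_mul])
    have hr' : r ∈ Icc a b := ⟨ht.1.trans hr.1, hr.2⟩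
    refine (norm_riccatiIntegrand_le t r).trans ?_
    gcongr
    exacts [hQ2.norm_le t r ht.1 hr.1 hr.2, hCr r hr', hPm r hr', hBr r hr',
      hQ1.norm_le t r ht.1 hr.1 hr.2]
  refine (norm_add_le _ _).trans (add_le_add hterminal (hintegral.trans ?_))
  gcongr
  exact ht.1

theorem stronglyContinuousOn_riccatiMap (hab : a ≤ b)
    (hQ1 : IsBoundedStronglyContinuousFamily Q1 a b M₁)
    (hQ2 : IsBoundedStronglyContinuousFamily Q2 a b M₂)
    (hB : StronglyContinuousOn B (Icc a b)) (hC : StronglyContinuousOn C (Icc a b))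
    (hBr : ∀ r ∈ Icc a b, ‖B r‖ ≤ r_B) (hCr : ∀ r ∈ Icc a b, ‖C r‖ ≤ r_C)
    {m : ℝ} (hP : StronglyContinuousOn P (Icc a b)) (hPm : ∀ r ∈ Icc a b, ‖P r‖ ≤ m) :
    StronglyContinuousOn (riccatiMap Q1 Q2 B C G b P) (Icc a b) := by
  intro x
  have hb : b ∈ Icc a b := ⟨hab, le_rfl⟩
  refine ContinuousOn.congr (ContinuousOn.add ?_ ?_) fun t ht =>
    riccatiMap_apply hQ1 hQ2 hB hC hP ht x
  · exact (hQ2.stronglyContinuousOn_right b hb).continuousOn_apply isCompact_Icc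
      (G.continuous.comp_continuousOn (hQ1.stronglyContinuousOn_right b hb x))
  · refine continuousOn_intervalIntegral_lower (F := fun t r => riccatiIntegrand Q1 Q2 B C P t r x)
      (fun t ht => stronglyContinuousOn_riccatiIntegrand_right hQ1 hQ2 hB hC hP ht x)
      (fun r hr => stronglyContinuousOn_riccatiIntegrand_left hQ1 hQ2 hr x)
      (M := M₂ * (r_C + m ^ 2 * r_B) * M₁ * ‖x‖) fun t ht r hr => ?_
    have hr' : r ∈ Icc a b := ⟨ht.1.trans hr.1, hr.2⟩
    have hM₁ := hQ1.nonneg hab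
    have hM₂ := hQ2.nonneg hab
    have hr_C : 0 ≤ r_C := (norm_nonneg _).trans (hCr r hr')
    have hr_B : 0 ≤ r_B := (norm_nonneg _).trans (hBr r hr')
    refine ((riccatiIntegrand Q1 Q2 B C P t r).le_opNorm x).trans ?_
    gcongr
    refine (norm_riccatiIntegrand_le t r).trans ?_
    gcongr
    exacts [hQ2.norm_le t r ht.1 hr.1 hr.2, hCr r hr', hPm r hr', hBr r hr',
      hQ1.norm_le t r ht.1 hr.1 hr.2]

theorem norm_riccatiMap_sub_le (hQ1 : IsBoundedStronglyContinuousFamily Q1 a b M₁)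
    (hQ2 : IsBoundedStronglyContinuousFamily Q2 a b M₂)
    (hB : StronglyContinuousOn B (Icc a b)) (hC : StronglyContinuousOn C (Icc a b))
    (hBr : ∀ r ∈ Icc a b, ‖B r‖ ≤ r_B) {m m' : ℝ}
    (hP : StronglyContinuousOn P (Icc a b)) (hPm : ∀ r ∈ Icc a b, ‖P r‖ ≤ m)
    (hP' : StronglyContinuousOn P' (Icc a b)) (hP'm : ∀ r ∈ Icc a b, ‖P' r‖ ≤ m')
    {t : ℝ} (ht : t ∈ Icc a b) {g : ℝ → ℝ} (hg : IntervalIntegrable g volume t b)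
    (hPg : ∀ r ∈ Icc t b, ‖P r - P' r‖ ≤ g r) :
    ‖riccatiMap Q1 Q2 B C G b P t - riccatiMap Q1 Q2 B C G b P' t‖ ≤
      M₂ * ((m + m') * r_B) * M₁ * ∫ r in t..b, g r := by
  have hI := stronglyContinuousOn_riccatiIntegrand_right hQ1 hQ2 hB hC hP ht
  have hI' := stronglyContinuousOn_riccatiIntegrand_right hQ1 hQ2 hB hC hP' ht
  rw [riccatiMap, riccatiMap, add_sub_add_left_eq_sub, strongIntegral_sub ht.2 hI hI',
    ← intervalIntegral.integral_const_mul]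
  refine norm_strongIntegral_le ht.2 (hI.sub hI') (hg.const_mul _) fun r hr => ?_
  have hr' : r ∈ Icc a b := ⟨ht.1.trans hr.1, hr.2⟩
  have hab : a ≤ b := ht.1.trans ht.2
  have hM₁ := hQ1.nonneg hab
  have hM₂ := hQ2.nonneg hab
  have hr_B : 0 ≤ r_B := (norm_nonneg _).trans (hBr r hr')
  have hmm' : 0 ≤ m + m' := add_nonneg ((norm_nonneg _).trans (hPm r hr'))
    ((norm_nonneg _).trans (hP'm r hr'))
  have hg₀ : 0 ≤ g r := (norm_nonneg _).trans (hPg r hr)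
  refine (norm_riccatiIntegrand_sub_le t r).trans
    (le_of_le_of_eq ?_ (by ring : M₂ * ((m + m') * r_B * g r) * M₁ = _))
  gcongr
  exacts [hQ2.norm_le t r ht.1 hr.1 hr.2, hPm r hr', hP'm r hr', hBr r hr',
    hPg r hr, hQ1.norm_le t r ht.1 hr.1 hr.2]

theorem riccatiMap_mapsTo (hab : a ≤ b) (hQ1 : IsBoundedStronglyContinuousFamily Q1 a b M₁)
    (hQ2 : IsBoundedStronglyContinuousFamily Q2 a b M₂)
    (hB : StronglyContinuousOn B (Icc a b)) (hC : StronglyContinuousOn C (Icc a b))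
    (hBr : ∀ r ∈ Icc a b, ‖B r‖ ≤ r_B) (hCr : ∀ r ∈ Icc a b, ‖C r‖ ≤ r_C) (hG : ‖G‖ ≤ r_G)
    {ρ : ℝ} (hρ : M₂ * r_G * M₁ + (b - a) * (M₂ * (r_C + ρ ^ 2 * r_B) * M₁) ≤ ρ) :
    MapsTo (riccatiMap Q1 Q2 B C G b) (boundedStronglyContinuousOn (Icc a b) ρ)
      (boundedStronglyContinuousOn (Icc a b) ρ) :=
  fun _ ⟨hP, hPρ⟩ => ⟨stronglyContinuousOn_riccatiMap hab hQ1 hQ2 hB hC hBr hCr hP hPρ,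
    fun _ ht => (norm_riccatiMap_le hQ1 hQ2 hB hC hBr hCr hG hP hPρ ht).trans hρ⟩

theorem norm_riccatiMap_sub_le_of_forall_le (hQ1 : IsBoundedStronglyContinuousFamily Q1 a b M₁)
    (hQ2 : IsBoundedStronglyContinuousFamily Q2 a b M₂)
    (hB : StronglyContinuousOn B (Icc a b)) (hC : StronglyContinuousOn C (Icc a b))
    (hBr : ∀ r ∈ Icc a b, ‖B r‖ ≤ r_B) {ρ : ℝ}
    (hP : P ∈ boundedStronglyContinuousOn (Icc a b) ρ)
    (hP' : P' ∈ boundedStronglyContinuousOn (Icc a b) ρ)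
    {d : ℝ} (hd : ∀ r ∈ Icc a b, ‖P r - P' r‖ ≤ d) {t : ℝ} (ht : t ∈ Icc a b) :
    ‖riccatiMap Q1 Q2 B C G b P t - riccatiMap Q1 Q2 B C G b P' t‖ ≤
      (b - a) * (M₂ * ((ρ + ρ) * r_B) * M₁) * d := by
  have hab : a ≤ b := ht.1.trans ht.2
  have hM₁ := hQ1.nonneg hab
  have hM₂ := hQ2.nonneg hab
  have hρ : 0 ≤ ρ := (norm_nonneg _).trans (hP.2 t ht)
  have hr_B : 0 ≤ r_B := (norm_nonneg _).trans (hBr t ht)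
  have hd₀ : 0 ≤ d := (norm_nonneg _).trans (hd t ht)
  refine (norm_riccatiMap_sub_le hQ1 hQ2 hB hC hBr hP.1 hP.2 hP'.1 hP'.2 ht
    intervalIntegrable_const fun r hr => hd r ⟨ht.1.trans hr.1, hr.2⟩).trans ?_
  rw [intervalIntegral.integral_const, smul_eq_mul]
  calc _ ≤ M₂ * ((ρ + ρ) * r_B) * M₁ * ((b - a) * d) := by gcongr; exact ht.1
    _ = _ := by ring

theorem eqOn_of_riccatiMap_eq (hQ1 : IsBoundedStronglyContinuousFamily Q1 a b M₁)
    (hQ2 : IsBoundedStronglyContinuousFamily Q2 a b M₂)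
    (hB : StronglyContinuousOn B (Icc a b)) (hC : StronglyContinuousOn C (Icc a b))
    (hBr : ∀ r ∈ Icc a b, ‖B r‖ ≤ r_B)
    (hP : StronglyContinuousOn P (Icc a b)) (hP' : StronglyContinuousOn P' (Icc a b))
    (hPfix : ∀ t ∈ Icc a b, riccatiMap Q1 Q2 B C G b P t = P t)
    (hP'fix : ∀ t ∈ Icc a b, riccatiMap Q1 Q2 B C G b P' t = P' t) :
    EqOn P P' (Icc a b) := by
  obtain ⟨m, hm⟩ := hP.exists_norm_le isCompact_Icc
  obtain ⟨m', hm'⟩ := hP'.exists_norm_le isCompact_Icc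
  -- Gronwall for `‖P - P'‖`, which need not be measurable: only continuous majorants are integrated
  have hle := nonpos_of_le_mul_integral (u := fun t => ‖P t - P' t‖) (D := m + m')
    (fun t ht => (norm_sub_le _ _).trans (add_le_add (hm t ht) (hm' t ht)))
    fun t ht g hg hPg => by
      rw [← hPfix t ht, ← hP'fix t ht]
      exact norm_riccatiMap_sub_le hQ1 hQ2 hB hC hBr hP hm hP' hm' ht
        (hg.intervalIntegrable _ _) hPg
  exact fun t ht => sub_eq_zero.1 (norm_le_zero_iff.1 (hle t ht))

end Riccati

/-- `ρ / 2` bounds the terminal and source terms of the Riccati map on the ball of radius `ρ`,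
and `k ρ / 2` its quadratic term, where `k` is its Lipschitz constant there. -/
theorem riccati_constants {M₁ M₂ r_B r_C r_G L : ℝ} (hM₁ : 0 ≤ M₁) (hM₂ : 0 ≤ M₂)
    (hr_C : 0 ≤ r_C) (hr_G : 0 ≤ r_G) (hL : 0 ≤ L)
    (hsmall : 4 * L * M₁ ^ 2 * M₂ ^ 2 * (r_G + L * r_C) * r_B < 1) :
    let ρ := 2 * M₁ * M₂ * (r_G + L * r_C)
    0 ≤ ρ ∧ L * (M₂ * ((ρ + ρ) * r_B) * M₁) < 1 ∧
      M₂ * r_G * M₁ + L * (M₂ * (r_C + ρ ^ 2 * r_B) * M₁) ≤ ρ := by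
  intro ρ
  have hρ : 0 ≤ ρ := by positivity
  have hk : L * (M₂ * ((ρ + ρ) * r_B) * M₁) =
      4 * L * M₁ ^ 2 * M₂ ^ 2 * (r_G + L * r_C) * r_B := by
    ring
  refine ⟨hρ, hk ▸ hsmall, ?_⟩
  have hsplit : M₂ * r_G * M₁ + L * (M₂ * (r_C + ρ ^ 2 * r_B) * M₁) =
      ρ / 2 + (L * (M₂ * ((ρ + ρ) * r_B) * M₁)) * ρ / 2 := by
    ring
  rw [hsplit, hk]
  nlinarith

theorem riccati_equation_unique_solution_small_interval_general
    {X₁ X₂ : Type*}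
    [NormedAddCommGroup X₁] [NormedSpace ℝ X₁] [CompleteSpace X₁]
    [NormedAddCommGroup X₂] [NormedSpace ℝ X₂] [CompleteSpace X₂]
    (a b : ℝ) (hab : a ≤ b)
    -- uniformly bounded families Q⁽¹⁾, Q⁽²⁾, strongly continuous in each variable
    (Q1 : ℝ → ℝ → X₁ →L[ℝ] X₁) (Q2 : ℝ → ℝ → X₂ →L[ℝ] X₂)
    (M₁ M₂ : ℝ)
    (hQ1bdd : ∀ t s : ℝ, a ≤ t → t ≤ s → s ≤ b → ‖Q1 s t‖ ≤ M₁)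
    (hQ2bdd : ∀ t s : ℝ, a ≤ t → t ≤ s → s ≤ b → ‖Q2 s t‖ ≤ M₂)
    (hQ1sc₁ : ∀ x : X₁, ∀ t ∈ Set.Icc a b, ContinuousOn (fun s => Q1 s t x) (Set.Icc t b))
    (hQ1sc₂ : ∀ x : X₁, ∀ s ∈ Set.Icc a b, ContinuousOn (fun t => Q1 s t x) (Set.Icc a s))
    (hQ2sc₁ : ∀ y : X₂, ∀ t ∈ Set.Icc a b, ContinuousOn (fun s => Q2 s t y) (Set.Icc t b))
    (hQ2sc₂ : ∀ y : X₂, ∀ s ∈ Set.Icc a b, ContinuousOn (fun t => Q2 s t y) (Set.Icc a s))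
    -- coefficient B with sup-norm bound
    (B : ℝ → X₂ →L[ℝ] X₁)
    (hBsc : ∀ y : X₂, ContinuousOn (fun t => B t y) (Set.Icc a b))
    -- coefficient C and terminal operator G with bounds
    (C : ℝ → X₁ →L[ℝ] X₂)
    (hCsc : ∀ x : X₁, ContinuousOn (fun t => C t x) (Set.Icc a b))
    (G : X₁ →L[ℝ] X₂)
    (r_B r_C r_G : ℝ)
    (hG : ‖G‖ ≤ r_G) (hC : ∀ t ∈ Set.Icc a b, ‖C t‖ ≤ r_C)
    (hB : ∀ t ∈ Set.Icc a b, ‖B t‖ ≤ r_B)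
    (hsmall : 4 * (b - a) * M₁ ^ 2 * M₂ ^ 2 * (r_G + (b - a) * r_C) * r_B < 1) :
    ∃ P : ℝ → X₁ →L[ℝ] X₂,
      (∀ x : X₁, ContinuousOn (fun t => P t x) (Set.Icc a b)) ∧
      (∀ t ∈ Set.Icc a b, ‖P t‖ ≤ 2 * M₁ * M₂ * (r_G + (b - a) * r_C)) ∧
      (∀ t ∈ Set.Icc a b, ∀ x : X₁,
        P t x = Q2 b t (G (Q1 b t x)) +
          ∫ r in t..b, Q2 r t (C r (Q1 r t x) - P r (B r (P r (Q1 r t x))))) ∧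
      (∀ P' : ℝ → X₁ →L[ℝ] X₂,
        (∀ x : X₁, ContinuousOn (fun t => P' t x) (Set.Icc a b)) →
        (∀ t ∈ Set.Icc a b, ∀ x : X₁,
          P' t x = Q2 b t (G (Q1 b t x)) +
            ∫ r in t..b, Q2 r t (C r (Q1 r t x) - P' r (B r (P' r (Q1 r t x))))) →
        ∀ t ∈ Set.Icc a b, P' t = P t) := by
  have hQ1 : IsBoundedStronglyContinuousFamily Q1 a b M₁ :=
    ⟨hQ1bdd, fun t ht x => hQ1sc₁ x t ht, fun s hs x => hQ1sc₂ x s hs⟩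
  have hQ2 : IsBoundedStronglyContinuousFamily Q2 a b M₂ :=
    ⟨hQ2bdd, fun t ht y => hQ2sc₁ y t ht, fun s hs y => hQ2sc₂ y s hs⟩
  obtain ⟨hρ₀, hk, hρ⟩ := riccati_constants (hQ1.nonneg hab) (hQ2.nonneg hab)
    ((norm_nonneg _).trans (hC a ⟨le_rfl, hab⟩)) ((norm_nonneg _).trans hG) (sub_nonneg.2 hab)
    hsmall
  obtain ⟨P, ⟨hPsc, hPρ⟩, hPfix⟩ := exists_fixedPoint_of_norm_sub_le hρ₀ hk
    (riccatiMap_mapsTo hab hQ1 hQ2 hBsc hCsc hB hC hG hρ)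
    fun _ hP _ hP' _ hd _ ht =>
      norm_riccatiMap_sub_le_of_forall_le hQ1 hQ2 hBsc hCsc hB hP hP' hd ht
  refine ⟨P, hPsc, hPρ, fun t ht x => ?_, fun P' hP'sc hP'eq => ?_⟩
  · rw [← hPfix t ht, riccatiMap_apply hQ1 hQ2 hBsc hCsc hPsc ht]
  · refine eqOn_of_riccatiMap_eq hQ1 hQ2 hBsc hCsc hB hP'sc hPsc (fun t ht => ?_) hPfix
    ext x
    rw [riccatiMap_apply hQ1 hQ2 hBsc hCsc hP'sc ht, hP'eq t ht x]

/-- under the smallness condition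
`4(b−a)M₁²M₂²(r_G + (b−a)r_C)r_B < 1`, the Riccati-type integral equation on `[a,b]`
has a unique strongly continuous solution, bounded by `2M₁M₂(r_G + (b−a)r_C)`. -/
theorem riccati_equation_unique_solution_small_interval
    {X₁ X₂ : Type*}
    [NormedAddCommGroup X₁] [NormedSpace ℝ X₁] [CompleteSpace X₁]
    [NormedAddCommGroup X₂] [NormedSpace ℝ X₂] [CompleteSpace X₂]
    (a b : ℝ) (hab : a ≤ b)
    -- uniformly bounded families Q⁽¹⁾, Q⁽²⁾, strongly continuous in each variable
    (Q1 : ℝ → ℝ → X₁ →L[ℝ] X₁) (Q2 : ℝ → ℝ → X₂ →L[ℝ] X₂)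
    (M₁ M₂ : ℝ)
    (hQ1bdd : ∀ t s : ℝ, a ≤ t → t ≤ s → s ≤ b → ‖Q1 s t‖ ≤ M₁)
    (hQ2bdd : ∀ t s : ℝ, a ≤ t → t ≤ s → s ≤ b → ‖Q2 s t‖ ≤ M₂)
    (hQ1sc₁ : ∀ x : X₁, ∀ t ∈ Set.Icc a b, ContinuousOn (fun s => Q1 s t x) (Set.Icc t b))
    (hQ1sc₂ : ∀ x : X₁, ∀ s ∈ Set.Icc a b, ContinuousOn (fun t => Q1 s t x) (Set.Icc a s))
    (hQ2sc₁ : ∀ y : X₂, ∀ t ∈ Set.Icc a b, ContinuousOn (fun s => Q2 s t y) (Set.Icc t b))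
    (hQ2sc₂ : ∀ y : X₂, ∀ s ∈ Set.Icc a b, ContinuousOn (fun t => Q2 s t y) (Set.Icc a s))
    -- coefficient B with sup-norm bound
    (B : ℝ → X₂ →L[ℝ] X₁)
    (hBsc : ∀ y : X₂, ContinuousOn (fun t => B t y) (Set.Icc a b))
    (nB : ℝ) (hnB : ∀ t ∈ Set.Icc a b, ‖B t‖ ≤ nB)
    -- coefficient C and terminal operator G with bounds
    (C : ℝ → X₁ →L[ℝ] X₂)
    (hCsc : ∀ x : X₁, ContinuousOn (fun t => C t x) (Set.Icc a b))
    (G : X₁ →L[ℝ] X₂)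
    (r_B r_C r_G : ℝ)
    (hrB : 0 < r_B) (hrC : 0 < r_C) (hrG : 0 < r_G)
    (hG : ‖G‖ ≤ r_G) (hC : ∀ t ∈ Set.Icc a b, ‖C t‖ ≤ r_C)
    (hB : ∀ t ∈ Set.Icc a b, ‖B t‖ ≤ r_B)
    (hsmall : 4 * (b - a) * M₁ ^ 2 * M₂ ^ 2 * (r_G + (b - a) * r_C) * r_B < 1) :
    ∃ P : ℝ → X₁ →L[ℝ] X₂,
      (∀ x : X₁, ContinuousOn (fun t => P t x) (Set.Icc a b)) ∧
      (∀ t ∈ Set.Icc a b, ‖P t‖ ≤ 2 * M₁ * M₂ * (r_G + (b - a) * r_C)) ∧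
      (∀ t ∈ Set.Icc a b, ∀ x : X₁,
        P t x = Q2 b t (G (Q1 b t x)) +
          ∫ r in t..b, Q2 r t (C r (Q1 r t x) - P r (B r (P r (Q1 r t x))))) ∧
      (∀ P' : ℝ → X₁ →L[ℝ] X₂,
        (∀ x : X₁, ContinuousOn (fun t => P' t x) (Set.Icc a b)) →
        (∀ t ∈ Set.Icc a b, ∀ x : X₁,
          P' t x = Q2 b t (G (Q1 b t x)) +
            ∫ r in t..b, Q2 r t (C r (Q1 r t x) - P' r (B r (P' r (Q1 r t x))))) →
        ∀ t ∈ Set.Icc a b, P' t = P t) :=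
  riccati_equation_unique_solution_small_interval_general a b hab Q1 Q2 M₁ M₂ hQ1bdd hQ2bdd hQ1sc₁
    hQ1sc₂ hQ2sc₁ hQ2sc₂ B hBsc C hCsc G r_B r_C r_G hG hC hB hsmall
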